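/- Let ℓ ≥ 1 and N > 2ℓ+2, with periodic boundary conditions or special boundary conditions s = (c₁, c_N), and Ñ = N − (ℓ+2). For every ψ' ∈ V_Ñ there exists a state φ' ∈ V_N such that Q₂ (G ψ') = (−1)^ℓ ( G (Q̃ ψ') + Q₁ φ' ), where Q̃ is the unit-coupling supercharge of the Ñ-site chain with the corresponding boundary conditions. -/

import Mathlib

attribute [local instance 10] Classical.propDecidable

noncomputable section

/-- A configuration of `N` sites: `true` = occupied, `false` = empty. -/
abbrev Config (N : ℕ) := Fin N → Bool

/-- Extension of a configuration to all of `ℕ`, by empty sites outside the chain. -/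
def extc {N : ℕ} (σ : Config N) (t : ℕ) : Bool :=
  if h : t < N then σ ⟨t, h⟩ else false

/-- The fermion number: the number of occupied sites. -/
def fermions {N : ℕ} (σ : Config N) : ℕ :=
  (Finset.univ.filter fun i => σ i = true).card

/-- Allowed configurations of the open chain of `N` sites with exclusion parameter `ℓ`
and special boundary conditions `(c₁, cN)`: no cluster is longer than `ℓ`, the cluster
containing the first site (if occupied) has length at most `c₁`, and the cluster
containing the last site (if occupied) has length at most `cN`. -/
def OpenOK (N ℓ c₁ cN : ℕ) (σ : Config N) : Prop :=
  (∀ a : ℕ, ¬ ∀ k ≤ ℓ, extc σ (a + k) = true) ∧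
  (¬ (c₁ + 1 ≤ N ∧ ∀ k ≤ c₁, extc σ k = true)) ∧
  (¬ (cN + 1 ≤ N ∧ ∀ k ≤ cN, extc σ (N - 1 - k) = true))

/-- Cyclic shift of a site of the closed chain by `k` steps. -/
def cyc {N : ℕ} (i : Fin N) (k : ℕ) : Fin N :=
  ⟨(i.1 + k) % N, Nat.mod_lt _ i.pos⟩

/-- Allowed configurations of the closed chain of `N` sites with periodic boundary
conditions: the chain is not fully occupied and no maximal cyclic run of occupied
sites is longer than `ℓ`. -/
def PerOK (N ℓ : ℕ) (σ : Config N) : Prop :=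
  ∀ i : Fin N, ∃ k ≤ ℓ, σ (cyc i k) = false

/-- The fermionic sign `(-1)^{#{j < i : σ j = 1}}`. -/
def sgn {N : ℕ} (σ : Config N) (i : Fin N) : ℂ :=
  (-1 : ℂ) ^ ((Finset.univ.filter fun j => j < i ∧ σ j = true).card)

/-- The Hilbert space `V_N`: complex functions on allowed configurations. -/
abbrev AState (N : ℕ) (OK : Config N → Prop) := {σ : Config N // OK σ} → ℂ

/-- Matrix of the supercharge with amplitudes `A`, with particle insertion
restricted to the sublattice `S`: the entry `(τ, σ)` is the amplitude (with fermionic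
sign) for obtaining `τ` from `σ` by occupying an empty site of `S`. -/
def QmatA (N : ℕ) (OK : Config N → Prop) (S : Fin N → Prop)
    (A : Config N → Fin N → ℂ) :
    Matrix {σ : Config N // OK σ} {σ : Config N // OK σ} ℂ := fun τ σ =>
  ∑ i : Fin N,
    if S i ∧ σ.1 i = false ∧ τ.1 = Function.update σ.1 i true
    then A σ.1 i * sgn σ.1 i else 0

/-- The supercharge with amplitudes `A` restricted to the sublattice `S`, as a linear map. -/
def QopA (N : ℕ) (OK : Config N → Prop) (S : Fin N → Prop)
    (A : Config N → Fin N → ℂ) : AState N OK →ₗ[ℂ] AState N OK :=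
  (QmatA N OK S A).mulVecLin

/-- The unit-coupling supercharge restricted to the sublattice `S`. -/
def Qop (N : ℕ) (OK : Config N → Prop) (S : Fin N → Prop) :
    AState N OK →ₗ[ℂ] AState N OK :=
  QopA N OK S fun _ _ => 1

/-- The subspace `V_{N,f}` of states supported on configurations with fermion number `f`. -/
def gradeV (N : ℕ) (OK : Config N → Prop) (f : ℕ) :
    Submodule ℂ (AState N OK) where
  carrier := {ψ | ∀ σ, fermions σ.1 ≠ f → ψ σ = 0}
  add_mem' := by
    intro a b ha hb σ h
    show a σ + b σ = 0
    rw [ha σ h, hb σ h, add_zero]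
  zero_mem' := by intro σ h; rfl
  smul_mem' := by
    intro c a ha σ h
    show c * a σ = 0
    rw [ha σ h, mul_zero]

/-- The first sublattice `S₁ = {1, …, ℓ+2}` (the first `ℓ+2` sites). -/
def S1 (N ℓ : ℕ) : Fin N → Prop := fun i => i.1 < ℓ + 2

/-- The second sublattice `S₂ = {ℓ+3, …, N}` (the remaining sites). -/
def S2 (N ℓ : ℕ) : Fin N → Prop := fun i => ℓ + 2 ≤ i.1

/-- The configuration `χ σ'`: the `(ℓ+2)`-site configuration `χ = 0 1…1 0`
followed by the `Ñ`-site configuration `σ'`. -/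
def glue (ℓ Nt : ℕ) (σ : Config Nt) : Config (Nt + (ℓ + 2)) := fun i =>
  if h : i.1 < ℓ + 2 then decide (1 ≤ i.1 ∧ i.1 ≤ ℓ)
  else σ ⟨i.1 - (ℓ + 2), by have h2 := i.isLt; omega⟩

/-- Matrix of the map `G : V_Ñ → V_N`, `e_{σ'} ↦ e_{χ σ'}`. -/
def Gmat (ℓ Nt : ℕ) (OKN : Config (Nt + (ℓ + 2)) → Prop) (OKt : Config Nt → Prop) :
    Matrix {σ : Config (Nt + (ℓ + 2)) // OKN σ} {σ : Config Nt // OKt σ} ℂ :=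
  fun τ σ => if τ.1 = glue ℓ Nt σ.1 then 1 else 0

/-- The linear map `G : V_Ñ → V_N` sending `e_{σ'}` to `e_{χ σ'}`. -/
def Gop (ℓ Nt : ℕ) (OKN : Config (Nt + (ℓ + 2)) → Prop) (OKt : Config Nt → Prop) :
    AState Nt OKt →ₗ[ℂ] AState (Nt + (ℓ + 2)) OKN :=
  (Gmat ℓ Nt OKN OKt).mulVecLin

/-!
On a basis vector `e_σ'`, the map `(-1)^ℓ Q₂ G - G Q̃` only leaves the vectors `e_{χ a}` with
`a = σ' + i` forbidden on the `Ñ`-site chain although `χ a` is allowed on the `N`-site chain: the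
sign `(-1)^ℓ` accounts for the `ℓ` particles of `χ`, and all other terms cancel. Such a defect
`χ a` contains a particle `j` of the `χ`-cluster whose removal leaves a configuration in which
`j` is the only site of `S₁` that can be re-occupied, because re-occupying either empty site of
`χ` (sites `0` and `ℓ + 1` in the 0-based indexing used here) creates a forbidden cluster.
Hence `e_{χ a} = ± Q₁ e_{χ a - j}`.
-/

open Function Finset

section Glue

variable {ℓ Nt : ℕ}

lemma extc_of_lt {N : ℕ} (σ : Config N) {t : ℕ} (h : t < N) : extc σ t = σ ⟨t, h⟩ :=
  dif_pos h

lemma extc_update {N : ℕ} (σ : Config N) (s : Fin N) (b : Bool) (t : ℕ) :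
    extc (update σ s b) t = if t = s.1 then b else extc σ t := by
  unfold extc
  split_ifs with h₁ h₂ h₂ <;> simp_all [Fin.ext_iff]

lemma extc_mono {N : ℕ} {σ τ : Config N} (h : τ ≤ σ) (t : ℕ) : extc τ t ≤ extc σ t := by
  unfold extc
  split_ifs
  exacts [h _, le_rfl]

lemma glue_of_lt (σ : Config Nt) (i : Fin (Nt + (ℓ + 2))) (h : i.1 < ℓ + 2) :
    glue ℓ Nt σ i = decide (1 ≤ i.1 ∧ i.1 ≤ ℓ) :=
  dif_pos h

lemma glue_of_eq_addNat (σ : Config Nt) (i : Fin (Nt + (ℓ + 2))) (j : Fin Nt)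
    (h : i.1 = j.1 + (ℓ + 2)) : glue ℓ Nt σ i = σ j := by
  simp [glue, h]

lemma glue_addNat (σ : Config Nt) (j : Fin Nt) : glue ℓ Nt σ (j.addNat (ℓ + 2)) = σ j :=
  glue_of_eq_addNat σ _ j rfl

lemma update_glue_addNat (σ : Config Nt) (j : Fin Nt) (b : Bool) :
    update (glue ℓ Nt σ) (j.addNat (ℓ + 2)) b = glue ℓ Nt (update σ j b) := by
  funext i
  by_cases hi : i.1 < ℓ + 2
  · have hne : i ≠ j.addNat (ℓ + 2) := fun h => by simp [h] at hi
    rw [update_of_ne hne, glue_of_lt _ _ hi, glue_of_lt _ _ hi]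
  · obtain ⟨i, rfl⟩ : ∃ i' : Fin Nt, i = i'.addNat (ℓ + 2) :=
      ⟨⟨i.1 - (ℓ + 2), by omega⟩, Fin.ext (by simp; omega)⟩
    simp [update_apply, glue_addNat]

lemma extc_glue_of_lt (σ : Config Nt) {t : ℕ} (h : t < ℓ + 2) :
    extc (glue ℓ Nt σ) t = decide (1 ≤ t ∧ t ≤ ℓ) := by
  rw [extc_of_lt _ (by omega), glue_of_lt _ _ h]

lemma extc_glue_add (σ : Config Nt) (t : ℕ) :
    extc (glue ℓ Nt σ) (t + (ℓ + 2)) = extc σ t := by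
  by_cases h : t < Nt
  · rw [extc_of_lt _ (by omega), extc_of_lt _ h, glue_of_eq_addNat _ _ ⟨t, h⟩ rfl]
  · simp only [extc, dif_neg h, dif_neg (show ¬ t + (ℓ + 2) < Nt + (ℓ + 2) by omega)]

lemma extc_glue_eq_true (σ : Config Nt) {t : ℕ} (h₁ : 1 ≤ t) (h₂ : t ≤ ℓ) :
    extc (glue ℓ Nt σ) t = true := by
  simp [extc_glue_of_lt σ (show t < ℓ + 2 by omega), h₁, h₂]

lemma extc_glue_of_ge (σ : Config Nt) {t : ℕ} (h : ℓ + 2 ≤ t) :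
    extc (glue ℓ Nt σ) t = extc σ (t - (ℓ + 2)) := by
  rw [← extc_glue_add (ℓ := ℓ) σ (t - (ℓ + 2)), Nat.sub_add_cancel h]

lemma empty_site_of_update_glue (a : Config Nt) {j i : Fin (Nt + (ℓ + 2))} (hi : i.1 < ℓ + 2)
    (hempty : update (glue ℓ Nt a) j false i = false) : i.1 = 0 ∨ i = j ∨ i.1 = ℓ + 1 := by
  by_contra! h
  rw [update_of_ne h.2.1, glue_of_lt a i hi, decide_eq_false_iff_not] at hempty
  omega

end Glue

section Sign

lemma Fin.sum_univ_add_comm {M : Type*} [AddCommMonoid M] {n m : ℕ} (f : Fin (n + m) → M) :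
    ∑ i, f i = ∑ j : Fin m, f (Fin.castLE (by omega) j) + ∑ i : Fin n, f (i.addNat m) := by
  rw [← (finCongr (Nat.add_comm m n)).sum_comp, Fin.sum_univ_add]
  congr 1
  exact Finset.sum_congr rfl fun i _ => congrArg f (Fin.ext (by simp [Nat.add_comm]))

lemma Fin.card_filter_val_mem_Icc {n a b : ℕ} (h : b < n) :
    #{j : Fin n | a ≤ j.1 ∧ j.1 ≤ b} = b + 1 - a := by
  rw [← Finset.card_map Fin.valEmbedding]
  trans #(Icc a b)
  · congr 1
    ext t
    simp only [mem_map, mem_filter, mem_univ, true_and, Fin.valEmbedding_apply, mem_Icc]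
    exact ⟨fun ⟨j, hj, hjt⟩ => hjt ▸ hj, fun h' => ⟨⟨t, by omega⟩, h', rfl⟩⟩
  · simp

lemma sgn_mul_self {N : ℕ} (σ : Config N) (i : Fin N) : sgn σ i * sgn σ i = 1 := by
  rw [sgn, ← mul_pow]
  norm_num

variable {ℓ Nt : ℕ}

lemma card_filter_glue_lt (σ : Config Nt) (i : Fin Nt) :
    #{j | j < i.addNat (ℓ + 2) ∧ glue ℓ Nt σ j = true} = ℓ + #{j | j < i ∧ σ j = true} := by
  rw [card_filter, card_filter, Fin.sum_univ_add_comm]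
  congr 1
  · trans #{j : Fin (ℓ + 2) | 1 ≤ j.1 ∧ j.1 ≤ ℓ}
    · rw [card_filter]
      refine Finset.sum_congr rfl fun j _ => ?_
      rw [glue_of_lt _ _ j.2]
      simp only [Fin.lt_def, Fin.val_addNat, Fin.val_castLE, decide_eq_true_eq]
      congr 1
      exact propext ⟨fun h => h.2, fun h => ⟨by omega, h⟩⟩
    · simp [Fin.card_filter_val_mem_Icc]
  · refine Finset.sum_congr rfl fun j _ => ?_
    simp only [glue_addNat, Fin.lt_def, Fin.val_addNat, Nat.add_lt_add_iff_right]

lemma sgn_glue_addNat (σ : Config Nt) (i : Fin Nt) :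
    sgn (glue ℓ Nt σ) (i.addNat (ℓ + 2)) = (-1) ^ ℓ * sgn σ i := by
  rw [sgn, sgn, card_filter_glue_lt, pow_add]

end Sign

section BasisVectors

variable {N : ℕ} {OK : Config N → Prop}

/-- The basis vector `e_σ` of `V_N`, extended by `0` to forbidden configurations `σ`. -/
def configVec (OK : Config N → Prop) (σ : Config N) : AState N OK :=
  fun τ => if τ.1 = σ then 1 else 0

lemma configVec_of_not {σ : Config N} (h : ¬ OK σ) : configVec OK σ = 0 :=
  funext fun τ => if_neg fun (hτ : τ.1 = σ) => h (hτ ▸ τ.2)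

lemma configVec_eq_single {σ : Config N} (hσ : OK σ) : configVec OK σ = Pi.single ⟨σ, hσ⟩ 1 := by
  funext τ
  simp [configVec, Pi.single_apply, Subtype.ext_iff]

lemma Qop_configVec (S : Fin N → Prop) {σ : Config N} (hσ : OK σ) :
    Qop N OK S (configVec OK σ) =
      ∑ i, if S i ∧ σ i = false then sgn σ i • configVec OK (update σ i true) else 0 := by
  funext τ
  simp only [Qop, QopA, Matrix.mulVecLin_apply, configVec_eq_single hσ, Matrix.mulVec_single_one,
    Matrix.col_apply, QmatA, Finset.sum_apply]
  refine Finset.sum_congr rfl fun i _ => ?_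
  by_cases h : S i ∧ σ i = false
  · simp [h, configVec]
  · rw [if_neg h, if_neg fun h' => h ⟨h'.1, h'.2.1⟩]
    rfl

lemma Qop_smul_configVec_of_unique_refill (S : Fin N → Prop) {σ : Config N} (hσ : OK σ)
    (j : Fin N) (hj : S j) (hσj : σ j = false)
    (hunique : ∀ i, S i → σ i = false → OK (update σ i true) → i = j) :
    Qop N OK S (sgn σ j • configVec OK σ) = configVec OK (update σ j true) := by
  rw [map_smul, Qop_configVec S hσ, Finset.sum_eq_single j, if_pos ⟨hj, hσj⟩, smul_smul,
    sgn_mul_self, one_smul]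
  · intro i _ hij
    split_ifs with hi
    · rw [configVec_of_not fun hOK => hij (hunique i hi.1 hi.2 hOK), smul_zero]
    · rfl
  · exact fun h => absurd (Finset.mem_univ j) h

end BasisVectors

lemma LinearMap.apply_mem_of_forall_single_mem {ι R M : Type*} [Fintype ι] [DecidableEq ι]
    [CommSemiring R] [AddCommMonoid M] [Module R M] (f : (ι → R) →ₗ[R] M) (p : Submodule R M)
    (h : ∀ i, f (Pi.single i 1) ∈ p) (x : ι → R) : f x ∈ p := by
  rw [← Finset.univ_sum_single x, map_sum]
  refine Submodule.sum_mem p fun i _ => ?_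
  rw [← mul_one (x i), ← smul_eq_mul, Pi.single_smul', map_smul]
  exact p.smul_mem _ (h i)

section Intertwining

variable {ℓ Nt : ℕ} {OKN : Config (Nt + (ℓ + 2)) → Prop} {OKt : Config Nt → Prop}

lemma Gop_configVec (σ : Config Nt) :
    Gop ℓ Nt OKN OKt (configVec OKt σ) = if OKt σ then configVec OKN (glue ℓ Nt σ) else 0 := by
  by_cases h : OKt σ
  · funext τ
    simp [h, configVec_eq_single h, Gop, Gmat, configVec]
  · rw [configVec_of_not h, map_zero, if_neg h]

lemma Qop_S2_configVec_glue {σ : Config Nt} (hσ : OKN (glue ℓ Nt σ)) :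
    Qop (Nt + (ℓ + 2)) OKN (S2 (Nt + (ℓ + 2)) ℓ) (configVec OKN (glue ℓ Nt σ)) =
      (-1 : ℂ) ^ ℓ • ∑ i, if σ i = false
        then sgn σ i • configVec OKN (glue ℓ Nt (update σ i true)) else 0 := by
  rw [Qop_configVec _ hσ, Fin.sum_univ_add_comm, Finset.sum_eq_zero, zero_add, Finset.smul_sum]
  · refine Finset.sum_congr rfl fun i _ => ?_
    simp [S2, glue_addNat, sgn_glue_addNat, update_glue_addNat, mul_smul]
  · intro j _
    rw [if_neg fun h => absurd h.1 (by simp [S2])]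

lemma commutator_configVec (hglue : ∀ a, OKt a → OKN (glue ℓ Nt a)) {σ : Config Nt}
    (hσ : OKt σ) :
    (-1 : ℂ) ^ ℓ • Qop (Nt + (ℓ + 2)) OKN (S2 (Nt + (ℓ + 2)) ℓ)
        (Gop ℓ Nt OKN OKt (configVec OKt σ)) -
      Gop ℓ Nt OKN OKt (Qop Nt OKt (fun _ => True) (configVec OKt σ)) =
      ∑ i, if σ i = false ∧ ¬ OKt (update σ i true)
        then sgn σ i • configVec OKN (glue ℓ Nt (update σ i true)) else 0 := by
  rw [Gop_configVec, if_pos hσ, Qop_S2_configVec_glue (hglue σ hσ), smul_smul, ← mul_pow,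
    neg_one_mul, neg_neg, one_pow, one_smul, Qop_configVec _ hσ, map_sum,
    ← Finset.sum_sub_distrib]
  refine Finset.sum_congr rfl fun i _ => ?_
  by_cases hi : σ i = false
  · by_cases hok : OKt (update σ i true) <;> simp [hi, hok, Gop_configVec]
  · simp [hi]

end Intertwining

structure GluingCompatible (ℓ Nt : ℕ) (OKN : Config (Nt + (ℓ + 2)) → Prop)
    (OKt : Config Nt → Prop) : Prop where
  isLowerSet : IsLowerSet {σ | OKN σ}
  glue_of_ok : ∀ a, OKt a → OKN (glue ℓ Nt a)
  exists_hole : ∀ a, OKN (glue ℓ Nt a) → ¬ OKt a → ∃ j : Fin (Nt + (ℓ + 2)), 1 ≤ j.1 ∧ j.1 ≤ ℓ ∧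
    ¬ OKN (update (update (glue ℓ Nt a) j false) ⟨0, by omega⟩ true) ∧
    ¬ OKN (update (update (glue ℓ Nt a) j false) ⟨ℓ + 1, by omega⟩ true)

namespace GluingCompatible

variable {ℓ Nt : ℕ} {OKN : Config (Nt + (ℓ + 2)) → Prop} {OKt : Config Nt → Prop}

lemma configVec_glue_mem_range (h : GluingCompatible ℓ Nt OKN OKt) {a : Config Nt}
    (ha : ¬ OKt a) :
    configVec OKN (glue ℓ Nt a) ∈ LinearMap.range (Qop (Nt + (ℓ + 2)) OKN (S1 _ ℓ)) := by
  by_cases hg : OKN (glue ℓ Nt a)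
  swap
  · rw [configVec_of_not hg]
    exact Submodule.zero_mem _
  obtain ⟨j, hj₁, hjℓ, h₀, hℓ₁⟩ := h.exists_hole a hg ha
  have hσ : OKN (update (glue ℓ Nt a) j false) :=
    h.isLowerSet (update_le_self_iff.2 (Bool.false_le _)) hg
  have hrefill : update (update (glue ℓ Nt a) j false) j true = glue ℓ Nt a := by
    rw [update_idem, update_eq_self_iff, glue_of_lt a j (by omega)]
    simp [hj₁, hjℓ]
  refine ⟨_, hrefill ▸ Qop_smul_configVec_of_unique_refill _ hσ j (by simp [S1]; omega)
    (update_self _ _ _) fun i hi hempty hok => ?_⟩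
  rcases empty_site_of_update_glue a hi hempty with h0 | hij | hℓ1
  · rw [show i = ⟨0, by omega⟩ from Fin.ext h0] at hok
    exact absurd hok h₀
  · exact hij
  · rw [show i = ⟨ℓ + 1, by omega⟩ from Fin.ext hℓ1] at hok
    exact absurd hok hℓ₁

lemma commutator_mem_range (h : GluingCompatible ℓ Nt OKN OKt) (ψ : AState Nt OKt) :
    (-1 : ℂ) ^ ℓ • Qop (Nt + (ℓ + 2)) OKN (S2 _ ℓ) (Gop ℓ Nt OKN OKt ψ) -
        Gop ℓ Nt OKN OKt (Qop Nt OKt (fun _ => True) ψ) ∈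
      LinearMap.range (Qop (Nt + (ℓ + 2)) OKN (S1 _ ℓ)) := by
  refine LinearMap.apply_mem_of_forall_single_mem
    ((-1 : ℂ) ^ ℓ • (Qop _ OKN (S2 _ ℓ) ∘ₗ Gop ℓ Nt OKN OKt) -
      Gop ℓ Nt OKN OKt ∘ₗ Qop Nt OKt fun _ => True) _ (fun σ => ?_) ψ
  rw [← configVec_eq_single σ.2, LinearMap.sub_apply, LinearMap.smul_apply, LinearMap.comp_apply,
    LinearMap.comp_apply, commutator_configVec h.glue_of_ok σ.2]
  refine Submodule.sum_mem _ fun i _ => ?_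
  split_ifs with hi
  · exact Submodule.smul_mem _ _ (h.configVec_glue_mem_range hi.2)
  · exact Submodule.zero_mem _

end GluingCompatible

section OpenChain

variable {ℓ Nt c₁ cN : ℕ}

lemma extc_eq_true_of_le {N : ℕ} {σ τ : Config N} (h : τ ≤ σ) {t : ℕ}
    (ht : extc τ t = true) : extc σ t = true := by
  have := extc_mono h t
  rw [ht] at this
  exact top_le_iff.1 this

lemma isLowerSet_openOK (N : ℕ) : IsLowerSet {σ | OpenOK N ℓ c₁ cN σ} :=
  fun _ _ hτσ ⟨hrun, hfirst, hlast⟩ =>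
    ⟨fun b h => hrun b fun k hk => extc_eq_true_of_le hτσ (h k hk),
      fun ⟨hN, h⟩ => hfirst ⟨hN, fun k hk => extc_eq_true_of_le hτσ (h k hk)⟩,
      fun ⟨hN, h⟩ => hlast ⟨hN, fun k hk => extc_eq_true_of_le hτσ (h k hk)⟩⟩

lemma extc_glue_last {a : Config Nt} {k : ℕ} (hk : k < Nt) :
    extc (glue ℓ Nt a) (Nt + (ℓ + 2) - 1 - k) = extc a (Nt - 1 - k) := by
  rw [show Nt + (ℓ + 2) - 1 - k = Nt - 1 - k + (ℓ + 2) by omega, extc_glue_add]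

lemma openOK_glue (hNt : ℓ < Nt) (hcN : cN ≤ ℓ) {a : Config Nt} (ha : OpenOK Nt ℓ c₁ cN a) :
    OpenOK (Nt + (ℓ + 2)) ℓ c₁ cN (glue ℓ Nt a) := by
  obtain ⟨hrun, -, hlast⟩ := ha
  refine ⟨fun b h => ?_, fun ⟨_, h⟩ => ?_, fun ⟨_, h⟩ => ?_⟩
  · rcases Nat.lt_or_ge (ℓ + 1) b with hb | hb
    · refine hrun (b - (ℓ + 2)) fun k hk => ?_
      rw [← extc_glue_add, show b - (ℓ + 2) + k + (ℓ + 2) = b + k by omega]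
      exact h k hk
    · obtain rfl | hb₀ := Nat.eq_zero_or_pos b
      · simpa [extc_glue_of_lt] using h 0 (Nat.zero_le _)
      · have := h (ℓ + 1 - b) (by omega)
        rw [extc_glue_of_lt _ (by omega)] at this
        simp at this
        omega
  · simpa [extc_glue_of_lt] using h 0 (Nat.zero_le _)
  · exact hlast ⟨by omega, fun k hk => by rw [← extc_glue_last (by omega)]; exact h k hk⟩

lemma exists_hole_openOK {a : Config Nt}
    (hg : OpenOK (Nt + (ℓ + 2)) ℓ c₁ cN (glue ℓ Nt a)) (ha : ¬ OpenOK Nt ℓ c₁ cN a) :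
    ∃ j : Fin (Nt + (ℓ + 2)), 1 ≤ j.1 ∧ j.1 ≤ ℓ ∧
      ¬ OpenOK _ ℓ c₁ cN (update (update (glue ℓ Nt a) j false) ⟨0, by omega⟩ true) ∧
      ¬ OpenOK _ ℓ c₁ cN (update (update (glue ℓ Nt a) j false) ⟨ℓ + 1, by omega⟩ true) := by
  obtain ⟨grun, -, glast⟩ := hg
  have hrun : ∀ b, ¬ ∀ k ≤ ℓ, extc a (b + k) = true := fun b h =>
    grun (b + (ℓ + 2)) fun k hk => by rw [add_right_comm, extc_glue_add]; exact h k hk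
  have hlast : ¬ (cN + 1 ≤ Nt ∧ ∀ k ≤ cN, extc a (Nt - 1 - k) = true) := fun ⟨_, h⟩ =>
    glast ⟨by omega, fun k hk => by rw [extc_glue_last (by omega)]; exact h k hk⟩
  -- hence `a` violates only the bound on its first cluster
  obtain ⟨hc₁N, hfirst⟩ : c₁ + 1 ≤ Nt ∧ ∀ k ≤ c₁, extc a k = true :=
    not_not.1 fun h => ha ⟨hrun, h, hlast⟩
  have hc₁ : c₁ < ℓ := by
    by_contra!
    exact hrun 0 fun k hk => by rw [zero_add]; exact hfirst k (by omega)
  -- refilling the hole `c₁ + 1` at `0` makes the first cluster too long, and refilling it at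
  -- `ℓ + 1` creates the run `c₁ + 2, …, c₁ + ℓ + 2`
  refine ⟨⟨c₁ + 1, by omega⟩, by simp, by simp; omega,
    fun ⟨_, hfirst', _⟩ => hfirst' ⟨by omega, fun k hk => ?_⟩,
    fun ⟨hrun', _, _⟩ => hrun' (c₁ + 2) fun k hk => ?_⟩
  · simp only [extc_update]
    split_ifs with h₀ hj
    · rfl
    · omega
    · exact extc_glue_eq_true a (by omega) (by omega)
  · simp only [extc_update]
    split_ifs with hℓ₁ hj
    · rfl
    · omega
    · rcases Nat.lt_or_ge (c₁ + 2 + k) (ℓ + 2) with ht | ht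
      · exact extc_glue_eq_true a (by omega) (by omega)
      · rw [extc_glue_of_ge a ht]
        exact hfirst _ (by omega)

lemma gluingCompatible_openOK (hNt : ℓ < Nt) (hcN : cN ≤ ℓ) :
    GluingCompatible ℓ Nt (OpenOK (Nt + (ℓ + 2)) ℓ c₁ cN) (OpenOK Nt ℓ c₁ cN) where
  isLowerSet := isLowerSet_openOK _
  glue_of_ok _ := openOK_glue hNt hcN
  exists_hole _ := exists_hole_openOK

end OpenChain

section PeriodicChain

variable {ℓ Nt : ℕ}

lemma apply_cyc {N : ℕ} (σ : Config N) (i : Fin N) (k : ℕ) :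
    σ (cyc i k) = extc σ ((i.1 + k) % N) :=
  (extc_of_lt σ _).symm

lemma not_perOK_of_run {N : ℕ} {σ : Config N} (i : Fin N)
    (h : ∀ k ≤ ℓ, extc σ ((i.1 + k) % N) = true) : ¬ PerOK N ℓ σ := fun hσ => by
  obtain ⟨k, hk, hk'⟩ := hσ i
  rw [apply_cyc σ, h k hk] at hk'
  exact Bool.noConfusion hk'

lemma isLowerSet_perOK (N : ℕ) : IsLowerSet {σ | PerOK N ℓ σ} := fun _ _ hτσ hσ i =>
  let ⟨k, hk, h⟩ := hσ i
  ⟨k, hk, Bool.eq_false_of_le_false (h ▸ hτσ _)⟩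

lemma perOK_glue {a : Config Nt} (ha : PerOK Nt ℓ a) :
    PerOK (Nt + (ℓ + 2)) ℓ (glue ℓ Nt a) := by
  intro i
  simp only [apply_cyc]
  rcases Nat.lt_or_ge i.1 (ℓ + 2) with hi | hi
  · obtain h₀ | h₀ := Nat.eq_zero_or_pos i.1
    · exact ⟨0, Nat.zero_le _, by simp [h₀, extc_glue_of_lt]⟩
    · refine ⟨ℓ + 1 - i.1, by omega, ?_⟩
      rw [show i.1 + (ℓ + 1 - i.1) = ℓ + 1 by omega, Nat.mod_eq_of_lt (by omega),
        extc_glue_of_lt _ (by omega)]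
      simp
  · obtain ⟨k, hk, h⟩ := ha ⟨i.1 - (ℓ + 2), by omega⟩
    rw [apply_cyc a] at h
    by_cases hw : i.1 - (ℓ + 2) + k < Nt
    · refine ⟨k, hk, ?_⟩
      rw [Nat.mod_eq_of_lt hw] at h
      rw [Nat.mod_eq_of_lt (by omega), extc_glue_of_ge _ (by omega), ← h]
      congr 1
      omega
    · -- the run of `a` starting at `i` wraps around, so it meets the empty site `0` of `χ`
      refine ⟨Nt + (ℓ + 2) - i.1, by omega, ?_⟩
      rw [show i.1 + (Nt + (ℓ + 2) - i.1) = Nt + (ℓ + 2) by omega, Nat.mod_self,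
        extc_glue_of_lt _ (by omega)]
      simp



lemma exists_wrapping_run (hNt : ℓ < Nt) {a : Config Nt}
    (hg : PerOK (Nt + (ℓ + 2)) ℓ (glue ℓ Nt a)) (ha : ¬ PerOK Nt ℓ a) :
    ∃ m, 1 ≤ m ∧ m ≤ ℓ ∧ (∀ t, Nt - m ≤ t → t < Nt → extc a t = true) ∧
      ∀ t ≤ ℓ - m, extc a t = true := by
  simp only [PerOK, apply_cyc, not_forall, not_exists, not_and, Bool.not_eq_false] at ha
  obtain ⟨i₀, hi₀⟩ := ha
  have hi₀Nt := i₀.isLt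
  -- a run of `a` that does not wrap around would also be a run of `χ a`
  have hwrap : Nt - i₀.1 ≤ ℓ := by
    by_contra!
    obtain ⟨k, hk, h⟩ := hg ⟨i₀.1 + (ℓ + 2), by omega⟩
    have := hi₀ k hk
    rw [apply_cyc (glue ℓ Nt a), Fin.val_mk, Nat.mod_eq_of_lt (by omega),
      extc_glue_of_ge _ (by omega), show i₀.1 + (ℓ + 2) + k - (ℓ + 2) = i₀.1 + k by omega] at h
    rw [Nat.mod_eq_of_lt (by omega), h] at this
    exact Bool.noConfusion this
  refine ⟨Nt - i₀.1, by omega, hwrap, fun t h₁ h₂ => ?_, fun t ht => ?_⟩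
  · simpa [show i₀.1 + (t - i₀.1) = t by omega, Nat.mod_eq_of_lt h₂] using hi₀ (t - i₀) (by omega)
  · simpa [show i₀.1 + (Nt - i₀.1 + t) = t + Nt by omega,
      Nat.mod_eq_of_lt (show t < Nt by omega)] using hi₀ (Nt - i₀.1 + t) (by omega)

lemma exists_hole_perOK (hNt : ℓ < Nt) {a : Config Nt}
    (hg : PerOK (Nt + (ℓ + 2)) ℓ (glue ℓ Nt a)) (ha : ¬ PerOK Nt ℓ a) :
    ∃ j : Fin (Nt + (ℓ + 2)), 1 ≤ j.1 ∧ j.1 ≤ ℓ ∧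
      ¬ PerOK _ ℓ (update (update (glue ℓ Nt a) j false) ⟨0, by omega⟩ true) ∧
      ¬ PerOK _ ℓ (update (update (glue ℓ Nt a) j false) ⟨ℓ + 1, by omega⟩ true) := by
  obtain ⟨m, hm₁, hmℓ, htail, hhead⟩ := exists_wrapping_run hNt hg ha
  -- the hole at `ℓ + 1 - m` is refilled at `0` into the run `Nt + (ℓ + 2) - m, …, ℓ - m`
  -- and at `ℓ + 1` into the run `ℓ + 2 - m, …, 2 ℓ + 2 - m`
  refine ⟨⟨ℓ + 1 - m, by omega⟩, by simp; omega, by simp; omega,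
    not_perOK_of_run ⟨Nt + (ℓ + 2) - m, by omega⟩ fun k hk => ?_,
    not_perOK_of_run ⟨ℓ + 2 - m, by omega⟩ fun k hk => ?_⟩
  · simp only [extc_update]
    by_cases hkm : k < m
    · rw [Nat.mod_eq_of_lt (by omega), if_neg (by omega), if_neg (by omega),
        extc_glue_of_ge _ (by omega)]
      exact htail _ (by omega) (by omega)
    · rw [show Nt + (ℓ + 2) - m + k = k - m + (Nt + (ℓ + 2)) by omega, Nat.add_mod_right,
        Nat.mod_eq_of_lt (by omega)]
      split_ifs with h₀ hj
      · rfl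
      · omega
      · exact extc_glue_eq_true a (by omega) (by omega)
  · simp only [extc_update]
    rw [Nat.mod_eq_of_lt (by omega)]
    split_ifs with hℓ₁ hj
    · rfl
    · omega
    · rcases Nat.lt_or_ge (ℓ + 2 - m + k) (ℓ + 2) with ht | ht
      · exact extc_glue_eq_true a (by omega) (by omega)
      · rw [extc_glue_of_ge a ht]
        exact hhead _ (by omega)

lemma gluingCompatible_perOK (hNt : ℓ < Nt) :
    GluingCompatible ℓ Nt (PerOK (Nt + (ℓ + 2)) ℓ) (PerOK Nt ℓ) where
  isLowerSet := isLowerSet_perOK _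
  glue_of_ok _ := perOK_glue
  exists_hole _ := exists_hole_perOK hNt

end PeriodicChain

theorem Q2_commutes_with_G_general (ℓ Nt : ℕ) (hNt : ℓ < Nt)
    (OKN : Config (Nt + (ℓ + 2)) → Prop) (OKt : Config Nt → Prop)
    (hBC : (OKN = PerOK (Nt + (ℓ + 2)) ℓ ∧ OKt = PerOK Nt ℓ) ∨
      ∃ c₁ cN, c₁ ≤ ℓ ∧ cN ≤ ℓ ∧
        OKN = OpenOK (Nt + (ℓ + 2)) ℓ c₁ cN ∧ OKt = OpenOK Nt ℓ c₁ cN) :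
    ∀ ψ' : AState Nt OKt, ∃ φ' : AState (Nt + (ℓ + 2)) OKN,
      Qop (Nt + (ℓ + 2)) OKN (S2 (Nt + (ℓ + 2)) ℓ) (Gop ℓ Nt OKN OKt ψ') =
        ((-1 : ℂ) ^ ℓ) •
          (Gop ℓ Nt OKN OKt (Qop Nt OKt (fun _ => True) ψ') +
            Qop (Nt + (ℓ + 2)) OKN (S1 (Nt + (ℓ + 2)) ℓ) φ') := by
  intro ψ'
  have hcompat : GluingCompatible ℓ Nt OKN OKt := by
    rcases hBC with ⟨rfl, rfl⟩ | ⟨c₁, cN, -, hcN, rfl, rfl⟩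
    · exact gluingCompatible_perOK hNt
    · exact gluingCompatible_openOK hNt hcN
  obtain ⟨φ', hφ'⟩ := hcompat.commutator_mem_range ψ'
  refine ⟨φ', ?_⟩
  rw [hφ', add_sub_cancel, smul_smul, ← mul_pow, neg_one_mul, neg_neg, one_pow, one_smul]

/-- Commutation of `Q₂` with `G`: for a chain of `N = Ñ + (ℓ+2) > 2ℓ+2` sites with
periodic or special boundary conditions and every `ψ' ∈ V_Ñ`, there is a state
`φ' ∈ V_N` with `Q₂ (G ψ') = (-1)^ℓ (G (Q̃ ψ') + Q₁ φ')`, where `Q̃` is the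
supercharge of the `Ñ`-site chain. -/
theorem Q2_commutes_with_G (ℓ Nt : ℕ) (hℓ : 1 ≤ ℓ) (hNt : ℓ < Nt)
    (OKN : Config (Nt + (ℓ + 2)) → Prop) (OKt : Config Nt → Prop)
    (hBC : (OKN = PerOK (Nt + (ℓ + 2)) ℓ ∧ OKt = PerOK Nt ℓ) ∨
      ∃ c₁ cN, c₁ ≤ ℓ ∧ cN ≤ ℓ ∧
        OKN = OpenOK (Nt + (ℓ + 2)) ℓ c₁ cN ∧ OKt = OpenOK Nt ℓ c₁ cN) :
    ∀ ψ' : AState Nt OKt, ∃ φ' : AState (Nt + (ℓ + 2)) OKN,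
      Qop (Nt + (ℓ + 2)) OKN (S2 (Nt + (ℓ + 2)) ℓ) (Gop ℓ Nt OKN OKt ψ') =
        ((-1 : ℂ) ^ ℓ) •
          (Gop ℓ Nt OKN OKt (Qop Nt OKt (fun _ => True) ψ') +
            Qop (Nt + (ℓ + 2)) OKN (S1 (Nt + (ℓ + 2)) ℓ) φ') :=
  Q2_commutes_with_G_general ℓ Nt hNt OKN OKt hBC

end
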